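/- For n ≥ 4: if n is even then AI((Maj,rev)-MM_n) ≥ ⌈n/4⌉, and if n is odd then AI((Maj,rev)-MM_n) ≥ ⌈(n−1)/4⌉. -/

import Mathlib

abbrev BF (n : ℕ) := (Fin n → ZMod 2) → ZMod 2

/-- Hamming weight of a vector in `F₂ⁿ`. -/
def wtv {n : ℕ} (x : Fin n → ZMod 2) : ℕ :=
  (Finset.univ.filter fun i => x i = 1).card

/-- ANF coefficient `a_α = ⊕_{z ≤ α} f(z)`. -/
def anf {n : ℕ} (f : BF n) (α : Fin n → ZMod 2) : ZMod 2 :=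
  ∑ z ∈ Finset.univ.filter (fun z : Fin n → ZMod 2 => ∀ i, z i = 1 → α i = 1), f z

/-- Algebraic degree: the maximum weight of `α` with nonzero ANF coefficient
(0 for the zero function). -/
def degBF {n : ℕ} (f : BF n) : ℕ :=
  (Finset.univ.filter fun α => anf f α ≠ 0).sup wtv

/-- Algebraic immunity: minimum degree of a nonzero annihilator of `f` or of `1 ⊕ f`. -/
noncomputable def AI {n : ℕ} (f : BF n) : ℕ :=
  sInf {d : ℕ | ∃ g : BF n, g ≠ 0 ∧ degBF g = d ∧
    ((∀ x, g x * f x = 0) ∨ (∀ x, g x * (1 + f x) = 0))}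

/-- Inner product over F₂. -/
def ip {m : ℕ} (x y : Fin m → ZMod 2) : ZMod 2 := ∑ i, x i * y i

/-- The m-variable majority function: 1 iff the weight exceeds ⌊m/2⌋. -/
def majF (m : ℕ) : BF m := fun x => if m / 2 < wtv x then 1 else 0

/-- The bit reversal permutation of F₂^m. -/
def revPerm (m : ℕ) : (Fin m → ZMod 2) → (Fin m → ZMod 2) := fun x i => x i.rev

/-- (Maj,rev)-MM_{2m}(X,Y) = ⟨rev(X),Y⟩ ⊕ Maj_m(X) on 2m variables. -/
def MMrevEven (m : ℕ) : BF (m + m) :=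
  fun u => ip (revPerm m fun i => u (Fin.castAdd m i)) (fun i => u (Fin.natAdd m i))
    + majF m (fun i => u (Fin.castAdd m i))

/-- (Maj,rev)-MM_{2m+1}(W,X,Y) = W ⊕ (Maj,rev)-MM_{2m}(X,Y) on 2m+1 variables. -/
def MMrevOdd (m : ℕ) : BF (m + m + 1) :=
  fun u => u (Fin.last (m + m)) + MMrevEven m (fun i => u i.castSucc)

/-!
Write an annihilator `g` of `(Maj,rev)-MM_{2m}` (or of its complement) as
`g(x, y) = ∑_β g_β(x) y^β` and pick `β` of minimal weight with `g_β ≠ 0`. Minimality gives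
`g(x, β) = g_β(x)`, so `g_β` annihilates `⟨rev x, β⟩ + Maj(x)` up to a constant, and
`deg g_β + wt β ≤ deg g`. The linear term only sees the `wt β` coordinates `rev(supp β)`; freezing
them at a point where `g_β ≠ 0` leaves a nonzero function of degree `≤ b := deg g_β` which, if
`deg g < ⌈m/2⌉`, vanishes on the Hamming ball of radius `b` around `0` or around `1` (depending on
the frozen value of the linear term). But a nonzero function of degree `≤ b` cannot vanish on
such a ball: its ANF coefficients of weight `≤ b` are sums of its values on the ball.
In the odd case an annihilator restricts to a nonzero annihilator of `c + (Maj,rev)-MM_{2m}` on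
some slice `W = c`.
-/

open Finset Function

namespace BooleanFunction

variable {n : ℕ}

abbrev SuppSubset (z α : Fin n → ZMod 2) : Prop := ∀ i, z i = 1 → α i = 1

local infix:50 " ≼ " => SuppSubset

lemma zmod_two_eq_zero_of_ne_one {a : ZMod 2} (h : a ≠ 1) : a = 0 := by
  revert a; decide

lemma SuppSubset.antisymm {z α : Fin n → ZMod 2} (h₁ : z ≼ α) (h₂ : α ≼ z) : z = α := by
  funext i
  by_cases hz : z i = 1
  · exact h₁ i hz ▸ hz
  · by_cases hα : α i = 1
    · exact absurd (h₂ i hα) hz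
    · rw [zmod_two_eq_zero_of_ne_one hz, zmod_two_eq_zero_of_ne_one hα]

lemma suppSubset_update_iff {γ y : Fin n → ZMod 2} {j : Fin n} (hγ : γ j ≠ 1) (v : ZMod 2) :
    (γ ≼ update y j v) ↔ (γ ≼ y) := by
  refine forall_congr' fun i => imp_congr_right fun hi => ?_
  rw [update_of_ne (by rintro rfl; exact hγ hi)]

lemma SuppSubset.wtv_le {z α : Fin n → ZMod 2} (h : z ≼ α) : wtv z ≤ wtv α :=
  card_le_card fun i => by simpa using h i

lemma SuppSubset.eq_of_wtv_le {z α : Fin n → ZMod 2} (h : z ≼ α) (hw : wtv α ≤ wtv z) :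
    z = α := by
  have hsub : univ.filter (fun i => z i = 1) ⊆ univ.filter (fun i => α i = 1) :=
    fun i => by simpa using h i
  have heq := eq_of_subset_of_card_le hsub hw
  refine h.antisymm fun i hi => ?_
  have : i ∈ univ.filter fun i => z i = 1 := heq ▸ mem_filter.2 ⟨mem_univ i, hi⟩
  simpa using this

lemma SuppSubset.wtv_lt {z α : Fin n → ZMod 2} (h : z ≼ α) (hne : z ≠ α) : wtv z < wtv α :=
  h.wtv_le.lt_of_not_ge fun hw => hne (h.eq_of_wtv_le hw)

lemma wtv_le (x : Fin n → ZMod 2) : wtv x ≤ n :=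
  (card_filter_le _ _).trans_eq (card_fin n)

lemma wtv_add_one (x : Fin n → ZMod 2) : wtv (x + 1) = n - wtv x := by
  have h := card_filter_add_card_filter_not (s := univ) (fun i => x i = 1)
  have hflip : univ.filter (fun i => (x + 1) i = 1) = univ.filter (fun i => ¬ x i = 1) :=
    filter_congr fun i _ => by
      simp only [Pi.add_apply, Pi.one_apply]; generalize x i = a; revert a; decide
  rw [card_univ, Fintype.card_fin] at h
  rw [wtv, wtv, hflip]; omega

lemma wtv_le_wtv_add_card {x y : Fin n → ZMod 2} {S : Finset (Fin n)}
    (h : ∀ i ∉ S, x i = y i) : wtv x ≤ wtv y + S.card := by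
  refine (card_le_card fun i hi => ?_).trans (card_union_le _ S)
  by_cases hS : i ∈ S
  · exact mem_union_right _ hS
  · exact mem_union_left _ (by simpa [← h i hS] using hi)

lemma anf_eq_zero_of_update_invariant {F : BF n} {j : Fin n}
    (hF : ∀ x v, F (update x j v) = F x) {α : Fin n → ZMod 2} (hα : α j = 1) :
    anf F α = 0 := by
  refine sum_involution (fun z _ => update z j (z j + 1)) (fun z _ => ?_) (fun z _ _ h => ?_)
    (fun z hz => ?_) (fun z _ => by simp [add_assoc, ZModModule.add_self])
  · rw [hF, ZModModule.add_self]
  · simpa using congrFun h j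
  · simp only [mem_filter, mem_univ, true_and] at hz ⊢
    intro i hi
    by_cases hij : i = j
    · exact hij ▸ hα
    · exact hz i (by rwa [update_of_ne hij] at hi)

lemma anf_sum {ι : Type*} (s : Finset ι) (F : ι → BF n) (α : Fin n → ZMod 2) :
    anf (fun x => ∑ k ∈ s, F k x) α = ∑ k ∈ s, anf (F k) α :=
  sum_comm

lemma anf_anf (f : BF n) : anf (anf f) = f := by
  funext x
  have hswap : anf (anf f) x = ∑ z, anf (fun α => if z ≼ α then f z else 0) x := by
    unfold anf
    rw [sum_congr rfl fun α _ => sum_filter (fun z => z ≼ α) f]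
    exact sum_comm
  rw [hswap, sum_eq_single_of_mem x (mem_univ x)]
  · rw [anf, sum_eq_single_of_mem x (by simp)]
    · simp
    · intro α hα hne
      exact if_neg fun h => hne (SuppSubset.antisymm (mem_filter.1 hα).2 h)
  · intro z _ hzx
    obtain ⟨j, hj⟩ : ∃ j, z j ≠ x j := not_forall.1 fun h => hzx (funext h)
    by_cases hx : x j = 1
    · refine anf_eq_zero_of_update_invariant (fun α v => ?_) hx
      have hz : z j ≠ 1 := hx ▸ hj
      simp only [suppSubset_update_iff hz]
    · refine sum_eq_zero fun α hα => if_neg fun h => ?_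
      have hz : z j = 1 := by_contra fun hz =>
        hj (by rw [zmod_two_eq_zero_of_ne_one hz, zmod_two_eq_zero_of_ne_one hx])
      exact hx ((mem_filter.1 hα).2 j (h j hz))

lemma anf_injective : Injective (anf : BF n → BF n) :=
  LeftInverse.injective anf_anf

lemma anf_eq_zero_iff {f : BF n} : anf f = 0 ↔ f = 0 :=
  anf_injective.eq_iff' (funext fun _ => sum_const_zero)

lemma apply_eq_sum_anf (f : BF n) (x : Fin n → ZMod 2) :
    f x = ∑ γ, if γ ≼ x then anf f γ else 0 := by
  conv_lhs => rw [← anf_anf f]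
  exact sum_filter _ _

lemma degBF_le_iff {f : BF n} {b : ℕ} : degBF f ≤ b ↔ ∀ α, anf f α ≠ 0 → wtv α ≤ b := by
  simp [degBF]

lemma wtv_le_degBF {f : BF n} {α : Fin n → ZMod 2} (h : anf f α ≠ 0) : wtv α ≤ degBF f :=
  degBF_le_iff.1 le_rfl α h

lemma exists_anf_ne_zero_wtv_eq_degBF {f : BF n} (hf : f ≠ 0) :
    ∃ α, anf f α ≠ 0 ∧ wtv α = degBF f := by
  obtain ⟨α, hα⟩ : ∃ α, anf f α ≠ 0 := not_forall.1 fun h => hf (anf_eq_zero_iff.1 (funext h))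
  obtain ⟨β, hβ, hmax⟩ :=
    exists_mem_eq_sup (univ.filter fun α => anf f α ≠ 0) ⟨α, by simpa using hα⟩ wtv
  exact ⟨β, by simpa using hβ, hmax.symm⟩

lemma degBF_comp_le (g : BF n) (ψ : Fin n → ZMod 2 → ZMod 2) :
    degBF (fun x => g fun i => ψ i (x i)) ≤ degBF g := by
  refine degBF_le_iff.2 fun α hα => not_lt.1 fun hlt => hα ?_
  simp only [apply_eq_sum_anf g, anf_sum]
  refine sum_eq_zero fun γ _ => ?_
  by_cases hγ : anf g γ = 0
  · simp only [hγ, ite_self]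
    exact sum_const_zero
  obtain ⟨j, hαj, hγj⟩ : ∃ j, α j = 1 ∧ γ j ≠ 1 := by
    by_contra! h
    exact ((SuppSubset.wtv_le h).trans (wtv_le_degBF hγ)).not_gt hlt
  refine anf_eq_zero_of_update_invariant (fun x v => ?_) hαj
  have : (fun i => ψ i (update x j v i)) = update (fun i => ψ i (x i)) j (ψ j v) :=
    funext (apply_update ψ x j v)
  simp only [this, suppSubset_update_iff hγj]

lemma eq_zero_of_degBF_le_of_forall_wtv_le {G : BF n} {b : ℕ} (hdeg : degBF G ≤ b)
    (hvan : ∀ x, wtv x ≤ b → G x = 0) : G = 0 := by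
  refine anf_eq_zero_iff.1 (funext fun α => not_not.1 fun hα => hα ?_)
  have hw := degBF_le_iff.1 hdeg α hα
  exact sum_eq_zero fun z hz => hvan z ((SuppSubset.wtv_le (mem_filter.1 hz).2).trans hw)

lemma eq_zero_of_degBF_le_of_forall_wtv_add_le {G : BF n} {b : ℕ} (c : Fin n → ZMod 2)
    (hdeg : degBF G ≤ b) (hvan : ∀ x, wtv (x + c) ≤ b → G x = 0) : G = 0 := by
  have hshift : (fun x => G (x + c)) = 0 :=
    eq_zero_of_degBF_le_of_forall_wtv_le ((degBF_comp_le G fun i a => a + c i).trans hdeg)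
      fun x hx => hvan _ (by rwa [add_assoc, ZModModule.add_self, add_zero])
  funext x
  simpa [add_assoc, ZModModule.add_self] using congrFun hshift (x + c)

lemma anf_apply_zero (F : BF n) : anf F 0 = F 0 := by
  refine (sum_eq_single_of_mem 0 (by simp) fun z hz hne => absurd ?_ hne).trans rfl
  exact funext fun i => zmod_two_eq_zero_of_ne_one fun h => zero_ne_one ((mem_filter.1 hz).2 i h)

section Append

variable {m k : ℕ}

lemma wtv_append (α : Fin m → ZMod 2) (β : Fin k → ZMod 2) :
    wtv (Fin.append α β) = wtv α + wtv β := by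
  simp only [wtv, card_filter, Fin.sum_univ_add, Fin.append_left, Fin.append_right]

lemma append_suppSubset_append_iff {x α : Fin m → ZMod 2} {y β : Fin k → ZMod 2} :
    (Fin.append x y ≼ Fin.append α β) ↔ (x ≼ α) ∧ (y ≼ β) := by
  simp [SuppSubset, Fin.forall_fin_add]

lemma anf_append (g : BF (m + k)) (α : Fin m → ZMod 2) (β : Fin k → ZMod 2) :
    anf g (Fin.append α β) = anf (fun x => anf (fun y => g (Fin.append x y)) β) α := by
  simp only [anf, sum_filter]
  rw [← (Fin.appendEquiv m k).sum_comp, Fintype.sum_prod_type]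
  simp only [Fin.appendEquiv_apply, append_suppSubset_append_iff, ite_and]
  refine sum_congr rfl fun x _ => ?_
  by_cases hx : x ≼ α
  · simp only [if_pos hx]
    rfl
  · simp only [if_neg hx]
    exact sum_const_zero

/-- Writing `g (x, y) = ∑_β g_β(x) y^β`, this is `g_β`. -/
def yCoeff (g : BF (m + k)) (β : Fin k → ZMod 2) : BF m :=
  fun x => anf (fun y => g (Fin.append x y)) β

lemma wtv_add_wtv_le_degBF {g : BF (m + k)} {α : Fin m → ZMod 2} {β : Fin k → ZMod 2}
    (h : anf (yCoeff g β) α ≠ 0) : wtv α + wtv β ≤ degBF g := by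
  rw [← wtv_append]
  exact wtv_le_degBF (by rwa [anf_append])

lemma degBF_yCoeff_le (g : BF (m + k)) (β : Fin k → ZMod 2) :
    degBF (yCoeff g β) ≤ degBF g :=
  degBF_le_iff.2 fun _ h => (Nat.le_add_right _ _).trans (wtv_add_wtv_le_degBF h)

lemma degBF_yCoeff_add_wtv_le {g : BF (m + k)} {β : Fin k → ZMod 2} (h : yCoeff g β ≠ 0) :
    degBF (yCoeff g β) + wtv β ≤ degBF g := by
  obtain ⟨α, hα, hdeg⟩ := exists_anf_ne_zero_wtv_eq_degBF h
  exact hdeg ▸ wtv_add_wtv_le_degBF hα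

lemma apply_append_eq_yCoeff {g : BF (m + k)} {β : Fin k → ZMod 2}
    (hmin : ∀ β', β' ≼ β → β' ≠ β → yCoeff g β' = 0) (x : Fin m → ZMod 2) :
    g (Fin.append x β) = yCoeff g β x := by
  rw [← congrFun (anf_anf fun y => g (Fin.append x y)) β]
  exact sum_eq_single_of_mem β (by simp) fun β' hβ' hne =>
    congrFun (hmin β' (mem_filter.1 hβ').2 hne) x

lemma exists_yCoeff_ne_zero_minimal {g : BF (m + k)} (hg : g ≠ 0) :
    ∃ β, yCoeff g β ≠ 0 ∧ ∀ β', β' ≼ β → β' ≠ β → yCoeff g β' = 0 := by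
  obtain ⟨β₀, hβ₀⟩ : ∃ β, yCoeff g β ≠ 0 := by
    by_contra! h
    refine hg (anf_eq_zero_iff.1 (funext fun w => ?_))
    rw [← Fin.append_castAdd_natAdd (f := w), anf_append]
    exact congrFun (anf_eq_zero_iff.2 (h _)) _
  obtain ⟨β, hβ, hmin⟩ := exists_min_image (univ.filter fun β => yCoeff g β ≠ 0) wtv
    ⟨β₀, by simpa using hβ₀⟩
  refine ⟨β, by simpa using hβ, fun β' hle hne => not_not.1 fun h' => ?_⟩
  exact (hle.wtv_lt hne).not_ge (hmin β' (by simpa using h'))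

lemma degBF_comp_append_le (g : BF (m + k)) (y : Fin k → ZMod 2) :
    degBF (fun x => g (Fin.append x y)) ≤ degBF g := by
  -- freezing the last `k` inputs at `y` is coordinatewise, and `g (x, y)` is then the `y^0`-part
  set ψ : Fin (m + k) → ZMod 2 → ZMod 2 := Fin.append (fun _ a => a) (fun j _ => y j)
  have hfix : (fun x => g (Fin.append x y)) = yCoeff (fun u => g fun i => ψ i (u i)) 0 := by
    funext x
    rw [yCoeff, anf_apply_zero]
    congr 1
    funext i
    refine Fin.addCases (fun i => ?_) (fun j => ?_) i <;> simp [ψ]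
  rw [hfix]
  exact (degBF_yCoeff_le _ _).trans (degBF_comp_le g ψ)

end Append

lemma le_AI {f : BF n} {b : ℕ}
    (h : ∀ g : BF n, g ≠ 0 → ∀ e : ZMod 2, (∀ x, g x * (e + f x) = 0) → b ≤ degBF g) :
    b ≤ AI f := by
  unfold AI
  refine le_csInf ?_ ?_
  · by_cases hf : f = 0
    · exact ⟨_, fun _ => 1, fun h1 => one_ne_zero (congrFun h1 0), rfl,
        Or.inl fun x => by simp [hf]⟩
    · exact ⟨_, f, hf, rfl, Or.inr fun x => by generalize f x = a; revert a; decide⟩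
  · rintro d ⟨g, hg, rfl, hann | hann⟩
    · exact h g hg 0 (by simpa using hann)
    · exact h g hg 1 hann

lemma le_degBF_add_card_of_mul_add_majF_eq_zero {m : ℕ} {f ε : BF m} (hf : f ≠ 0)
    (S : Finset (Fin m)) (hε : ∀ x y, (∀ i ∈ S, x i = y i) → ε x = ε y)
    (hann : ∀ x, f x * (ε x + majF m x) = 0) : (m + 1) / 2 ≤ degBF f + S.card := by
  by_contra! hlt
  obtain ⟨x₀, hx₀⟩ : ∃ x₀, f x₀ ≠ 0 := not_forall.1 fun h0 => hf (funext h0)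
  set pat : (Fin m → ZMod 2) → Fin m → ZMod 2 := fun x i => if i ∈ S then x₀ i else x i
  set G : BF m := fun x => f (pat x)
  have hG_deg : degBF G ≤ degBF f := degBF_comp_le f fun i a => if i ∈ S then x₀ i else a
  have hG_ne : G ≠ 0 := fun h0 => hx₀ (by simpa [G, pat] using congrFun h0 x₀)
  have hpat_off : ∀ x, ∀ i ∉ S, pat x i = x i := fun x i hi => if_neg hi
  have hann' : ∀ x, G x * (ε x₀ + majF m (pat x)) = 0 := fun x => by
    rw [hε x₀ (pat x) fun i hi => (if_pos hi).symm]
    exact hann (pat x)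
  refine hG_ne ?_
  by_cases he : ε x₀ = 1
  · refine eq_zero_of_degBF_le_of_forall_wtv_le hG_deg fun x hx => ?_
    have hwt := wtv_le_wtv_add_card (hpat_off x)
    have hmaj : majF m (pat x) = 0 := if_neg (by omega)
    simpa [he, hmaj] using hann' x
  · refine eq_zero_of_degBF_le_of_forall_wtv_add_le 1 hG_deg fun x hx => ?_
    have hwt := wtv_le_wtv_add_card fun i hi => (hpat_off x i hi).symm
    have hle := wtv_le x
    rw [wtv_add_one] at hx
    have hmaj : majF m (pat x) = 1 := if_pos (by omega)
    simpa [zmod_two_eq_zero_of_ne_one he, hmaj] using hann' x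

end BooleanFunction

open BooleanFunction

lemma MMrevEven_append (m : ℕ) (x y : Fin m → ZMod 2) :
    MMrevEven m (Fin.append x y) = ip (revPerm m x) y + majF m x := by
  simp only [MMrevEven, Fin.append_left, Fin.append_right]

lemma MMrevOdd_append (m : ℕ) (x : Fin (m + m) → ZMod 2) (y : Fin 1 → ZMod 2) :
    MMrevOdd m (Fin.append x y) = y 0 + MMrevEven m x := by
  rw [Fin.append_right_eq_snoc]
  simp [MMrevOdd]

lemma ip_revPerm_eq_of_eqOn {m : ℕ} (β : Fin m → ZMod 2) {x y : Fin m → ZMod 2}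
    (h : ∀ i ∈ univ.filter fun i => β i.rev = 1, x i = y i) :
    ip (revPerm m x) β = ip (revPerm m y) β := by
  refine sum_congr rfl fun i _ => ?_
  by_cases hβ : β i = 1
  · simp only [revPerm, h i.rev (by simpa using hβ)]
  · rw [zmod_two_eq_zero_of_ne_one hβ, mul_zero, mul_zero]

lemma card_filter_rev_eq_wtv {m : ℕ} (β : Fin m → ZMod 2) :
    (univ.filter fun i : Fin m => β i.rev = 1).card = wtv β :=
  card_nbij' Fin.rev Fin.rev (fun i hi => by simpa using hi) (fun i hi => by simpa using hi)
    (fun i _ => Fin.rev_rev i) (fun i _ => Fin.rev_rev i)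

theorem le_degBF_of_mul_add_MMrevEven_eq_zero {m : ℕ} {g : BF (m + m)} (hg : g ≠ 0)
    (e : ZMod 2) (hann : ∀ u, g u * (e + MMrevEven m u) = 0) : (m + 1) / 2 ≤ degBF g := by
  obtain ⟨β, hβ, hmin⟩ := exists_yCoeff_ne_zero_minimal hg
  have hcore := le_degBF_add_card_of_mul_add_majF_eq_zero hβ
    (univ.filter fun i => β i.rev = 1) (ε := fun x => e + ip (revPerm m x) β)
    (fun x y hxy => congrArg (e + ·) (ip_revPerm_eq_of_eqOn β hxy))
    (fun x => by
      simpa [apply_append_eq_yCoeff hmin, MMrevEven_append, add_assoc] using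
        hann (Fin.append x β))
  rw [card_filter_rev_eq_wtv] at hcore
  exact hcore.trans (degBF_yCoeff_add_wtv_le hβ)

theorem le_degBF_of_mul_add_MMrevOdd_eq_zero {m : ℕ} {g : BF (m + m + 1)} (hg : g ≠ 0)
    (e : ZMod 2) (hann : ∀ u, g u * (e + MMrevOdd m u) = 0) : (m + 1) / 2 ≤ degBF g := by
  obtain ⟨y, hy⟩ : ∃ y : Fin 1 → ZMod 2, (fun x => g (Fin.append x y)) ≠ 0 := by
    by_contra! h
    exact hg (funext fun u => by
      rw [← Fin.append_castAdd_natAdd (f := u)]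
      exact congrFun (h _) _)
  refine (le_degBF_of_mul_add_MMrevEven_eq_zero hy (e + y 0) fun x => ?_).trans
    (degBF_comp_append_le g y)
  simpa [MMrevOdd_append, add_assoc] using hann (Fin.append x y)

/-- For n ≥ 4: if n = 2m is even then AI((Maj,rev)-MM_n) ≥ ⌈n/4⌉ = ⌈m/2⌉, and if
n = 2m+1 is odd then AI((Maj,rev)-MM_n) ≥ ⌈(n−1)/4⌉ = ⌈m/2⌉. -/
theorem AI_MMrev (m : ℕ) :
    (4 ≤ m + m → (m + 1) / 2 ≤ AI (MMrevEven m)) ∧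
    (4 ≤ m + m + 1 → (m + 1) / 2 ≤ AI (MMrevOdd m)) :=
  ⟨fun _ => le_AI fun _ hg e => le_degBF_of_mul_add_MMrevEven_eq_zero hg e,
    fun _ => le_AI fun _ hg e => le_degBF_of_mul_add_MMrevOdd_eq_zero hg e⟩
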